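/- Let G be a group containing a normal, non-abelian maximal subgroup M. Let x ∈ M \ Z(M) and y ∈ G \ M, and suppose that R is a maximal subgroup of G containing y such that the centraliser of y in R ∩ M is a proper subgroup of R ∩ M and R ∩ M ≠ Z(M). Then the distance d(x,y) in the non-commuting, non-generating graph nc(G) is at most 3. -/

import Mathlib

open Subgroup

namespace NC

variable {G : Type*} [Group G]

/-- The centre of a subgroup `H`, realised as a subgroup of the ambient group `G`. -/
def centerOf (H : Subgroup G) : Subgroup G := H ⊓ Subgroup.centralizer (H : Set G)

/-- `H` is a maximal subgroup of `K` (both subgroups of the ambient group `G`). -/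
def IsMaximalIn (H K : Subgroup G) : Prop :=
  H < K ∧ ∀ T : Subgroup G, H < T → T ≤ K → T = K

/-- The non-commuting, non-generating graph of `G`: vertices `x, y` are adjacent
iff they do not commute and do not generate `G`.  (Central elements are isolated
vertices here; the paper simply removes them from the vertex set.) -/
def ncGraph (G : Type*) [Group G] : SimpleGraph G where
  Adj x y := x * y ≠ y * x ∧ Subgroup.closure {x, y} ≠ ⊤
  symm := by
    constructor
    intro x y h
    exact ⟨fun e => h.1 e.symm, by rw [Set.pair_comm]; exact h.2⟩
  loopless := by
    constructor
    intro x h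
    exact h.1 rfl

/-- The conjugate `g H g⁻¹` of a subgroup `H` by an element `g`. -/
def conjSub (g : G) (H : Subgroup G) : Subgroup G := H.map (MulAut.conj g).toMonoidHom

/-- "The quotient of `G` by the subgroup `H` is cyclic": every coset of `H` is a
power of a fixed coset.  For `H` normal this says exactly that `G/H` is cyclic. -/
def QuotCyclic (H : Subgroup G) : Prop := ∃ g : G, ∀ x : G, ∃ n : ℤ, x⁻¹ * g ^ n ∈ H

/-- `P` is a Sylow `p`-subgroup of `G`. -/
def IsSylowIn (p : ℕ) (P : Subgroup G) : Prop :=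
  IsPGroup p P ∧ ∀ R : Subgroup G, IsPGroup p R → P ≤ R → R = P

/-- The Frattini subgroup of a subgroup `P` (the intersection of the maximal
subgroups of `P`), realised as a subgroup of the ambient group. -/
def phiIn (P : Subgroup G) : Subgroup G := P ⊓ sInf {W : Subgroup G | IsMaximalIn W P}

/-- `G` has exactly two conjugacy classes of maximal subgroups. -/
def TwoMaxClasses (G : Type*) [Group G] : Prop :=
  ∃ K L : Subgroup G, IsCoatom K ∧ IsCoatom L ∧ (∀ g : G, conjSub g K ≠ L) ∧
    ∀ T : Subgroup G, IsCoatom T → (∃ g : G, T = conjSub g K) ∨ (∃ g : G, T = conjSub g L)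

/-- The induced subgraph of the non-commuting, non-generating graph on the
actual vertex set `G \ Z(G)`. -/
def ncSubgraph (G : Type*) [Group G] := (ncGraph G).induce {x : G | x ∉ Subgroup.center G}

/-! The path is `x – z – w – y`: take `w ∈ R ∩ M` outside both `Z(M)` and `C(y)`, then `z ∈ M`
commuting with neither `x` nor `w`. The first two edges lie in `M`, the last in `R`. Both choices
exist because a group is never the union of two proper subgroups; that `R ∩ M ⊄ Z(M)` follows
from `R ∩ M ≠ Z(M)` since otherwise `G = R Z(M)` would make `M` abelian. -/

lemma exists_mem_notMem_of_not_le {H A B : Subgroup G} (hA : ¬H ≤ A) (hB : ¬H ≤ B) :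
    ∃ h ∈ H, h ∉ A ∧ h ∉ B := by
  obtain ⟨a, haH, haA⟩ := SetLike.not_le_iff_exists.mp hA
  obtain ⟨b, hbH, hbB⟩ := SetLike.not_le_iff_exists.mp hB
  by_cases haB : a ∈ B
  · by_cases hbA : b ∈ A
    · refine ⟨a * b, H.mul_mem haH hbH, fun hab => haA ?_, fun hab => hbB ?_⟩
      · simpa using A.mul_mem hab (A.inv_mem hbA)
      · simpa using B.mul_mem (B.inv_mem haB) hab
    · exact ⟨b, hbH, hbA, hbB⟩
  · exact ⟨a, haH, haA, haB⟩

instance centerOf_normal {M : Subgroup G} [M.Normal] : (centerOf M).Normal := by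
  unfold centerOf
  infer_instance

lemma not_le_centralizer_singleton {M : Subgroup G} {x : G} (hx : x ∈ M)
    (hxZ : x ∉ centerOf M) : ¬M ≤ centralizer {x} :=
  fun h => hxZ ⟨hx, fun _ hm => mem_centralizer_singleton_iff.mp (h hm)⟩

lemma le_centerOf_of_inf_le {M R : Subgroup G} (hMn : M.Normal) (hR : IsCoatom R)
    (hle : R ⊓ M ≤ centerOf M) (hne : R ⊓ M ≠ centerOf M) : M ≤ centerOf M := by
  have hZM : centerOf M ≤ M := inf_le_left
  have hZR : ¬centerOf M ≤ R := fun hZR => hne (le_antisymm hle (le_inf hZR hZM))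
  have htop : R ⊔ centerOf M = ⊤ := hR.2 _ (left_lt_sup.mpr hZR)
  intro m hm
  have hmRZ : m ∈ ((R ⊔ centerOf M : Subgroup G) : Set G) := by simp [htop]
  rw [mul_normal] at hmRZ
  obtain ⟨r, hr, z, hz, rfl⟩ := hmRZ
  have hrM : r ∈ M := by simpa using M.mul_mem hm (M.inv_mem (hZM hz))
  exact (centerOf M).mul_mem (hle ⟨hr, hrM⟩) hz

lemma ncGraph_adj_of_mem {K : Subgroup G} (hK : K ≠ ⊤) {a b : G} (ha : a ∈ K) (hb : b ∈ K)
    (hab : a * b ≠ b * a) : (ncGraph G).Adj a b := by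
  refine ⟨hab, fun htop => hK (top_le_iff.mp (htop ▸ ?_))⟩
  rw [closure_le]
  rintro g (rfl | rfl) <;> assumption

lemma _root_.SimpleGraph.reachable_and_dist_le_three {V : Type*} {Γ : SimpleGraph V} {a b c d : V}
    (hab : Γ.Adj a b) (hbc : Γ.Adj b c) (hcd : Γ.Adj c d) : Γ.Reachable a d ∧ Γ.dist a d ≤ 3 :=
  let p : Γ.Walk a d := .cons hab (.cons hbc (.cons hcd .nil))
  ⟨⟨p⟩, SimpleGraph.dist_le p⟩

theorem statement_15_general {M : Subgroup G} (hM : IsCoatom M) (hMn : M.Normal)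
    (hMna : ∃ a ∈ M, ∃ b ∈ M, a * b ≠ b * a)
    {x y : G} (hx : x ∈ M) (hxZ : x ∉ centerOf M)
    {R : Subgroup G} (hR : IsCoatom R) (hyR : y ∈ R)
    (hcent : (R ⊓ M) ⊓ Subgroup.centralizer {y} < R ⊓ M)
    (hRM : R ⊓ M ≠ centerOf M) :
    (ncGraph G).Reachable x y ∧ (ncGraph G).dist x y ≤ 3 := by
  have hRM_le : ¬R ⊓ M ≤ centerOf M := fun hle =>
    let ⟨a, ha, b, hb, hab⟩ := hMna
    hab ((le_centerOf_of_inf_le hMn hR hle hRM hb).2 a ha)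
  have hRM_cent : ¬R ⊓ M ≤ centralizer {y} := fun hle => hcent.not_ge (le_inf le_rfl hle)
  obtain ⟨w, ⟨hwR, hwM⟩, hwZ, hwy⟩ := exists_mem_notMem_of_not_le hRM_le hRM_cent
  obtain ⟨z, hzM, hzx, hzw⟩ := exists_mem_notMem_of_not_le
    (not_le_centralizer_singleton hx hxZ) (not_le_centralizer_singleton hwM hwZ)
  rw [mem_centralizer_singleton_iff] at hzx hzw hwy
  exact SimpleGraph.reachable_and_dist_le_three
    (ncGraph_adj_of_mem hM.1 hx hzM (Ne.symm hzx))
    (ncGraph_adj_of_mem hM.1 hzM hwM hzw)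
    (ncGraph_adj_of_mem hR.1 hwR hyR hwy)

/-- Lemma 4.7 / `lem:rmaxdist`. -/
theorem statement_15 {M : Subgroup G} (hM : IsCoatom M) (hMn : M.Normal)
    (hMna : ∃ a ∈ M, ∃ b ∈ M, a * b ≠ b * a)
    {x y : G} (hx : x ∈ M) (hxZ : x ∉ centerOf M) (hy : y ∉ M)
    {R : Subgroup G} (hR : IsCoatom R) (hyR : y ∈ R)
    (hcent : (R ⊓ M) ⊓ Subgroup.centralizer {y} < R ⊓ M)
    (hRM : R ⊓ M ≠ centerOf M) :
    (ncGraph G).Reachable x y ∧ (ncGraph G).dist x y ≤ 3 :=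
  statement_15_general hM hMn hMna hx hxZ hR hyR hcent hRM

end NC
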